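/- arXiv:1905.05066 — 4 statements merged into one kernel-verified Lean document; each statement's English description precedes it below -/
import Mathlib

section
/- Let C_opt be a color-spanning circle of radius 1 through q, centered at c on a line L through q. Suppose ℓ is another line through q making angle θ ≤ ε ≤ 1 with L. Then there exists a disk centered on ℓ, containing C_opt (hence color-spanning) with q on or inside its boundary, of radius at most 1 + ε. Formally: given dist(c,q) = 1 and a line ℓ through q with angle θ ≤ ε to the line qc, the disk centered at the projection of c onto ℓ with radius 1 + sin θ ≤ 1 + ε contains the closed disk B(c,1). -/
/-! The centre `d` is the foot of the perpendicular from `c` to `ℓ`, so `dist c d = sin θ`; the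
triangle inequality then puts `B(c, 1)` inside `B(d, 1 + sin θ)`, and `sin θ ≤ θ ≤ ε`. -/

open Real Metric

section ProjectionOntoLine

variable {E : Type*} [NormedAddCommGroup E] [InnerProductSpace ℝ E]

theorem norm_sub_inner_smul_sq_of_norm_eq_one {v : E} (hv : ‖v‖ = 1) (x : E) :
    ‖x - inner ℝ x v • v‖ ^ 2 = ‖x‖ ^ 2 - inner ℝ x v ^ 2 := by
  rw [norm_sub_sq_real, real_inner_smul_right, norm_smul, Real.norm_eq_abs, hv, mul_pow, sq_abs]
  ring

theorem norm_sub_inner_smul_eq_sin {x v : E} (hx : ‖x‖ = 1) (hv : ‖v‖ = 1) {θ : ℝ}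
    (hθ : |inner ℝ x v| = cos θ) (hsin : 0 ≤ sin θ) :
    ‖x - inner ℝ x v • v‖ = sin θ := by
  rw [← sq_eq_sq₀ (norm_nonneg _) hsin, norm_sub_inner_smul_sq_of_norm_eq_one hv, hx,
    ← sq_abs (inner ℝ x v), hθ]
  linarith [sin_sq_add_cos_sq θ]

end ProjectionOntoLine

theorem stmt7 (c q v d : EuclideanSpace ℝ (Fin 2)) (θ ε : ℝ)
    (hθ0 : 0 ≤ θ) (hθε : θ ≤ ε) (hε : ε ≤ 1)
    (hcq : dist c q = 1) (hv : ‖v‖ = 1)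
    (hangle : |(inner ℝ (c - q) v : ℝ)| = Real.cos θ)
    (hd : d = q + (inner ℝ (c - q) v : ℝ) • v) :
    (∀ p : EuclideanSpace ℝ (Fin 2), dist p c ≤ 1 → dist p d ≤ 1 + Real.sin θ) ∧
    1 + Real.sin θ ≤ 1 + ε := by
  have hsin : 0 ≤ sin θ := sin_nonneg_of_nonneg_of_le_pi hθ0 (by linarith [pi_gt_three])
  have hcd : dist c d = sin θ := by
    rw [hd, dist_eq_norm, sub_add_eq_sub_sub]
    exact norm_sub_inner_smul_eq_sin (by rwa [← dist_eq_norm]) hv hangle hsin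
  refine ⟨fun p hp => ?_, by linarith [sin_le hθ0]⟩
  exact closedBall_subset_closedBall' (by rw [hcd]) (mem_closedBall.mpr hp)
end

section
/- Let P be a finite set of points on the real line with a surjective coloring c : P → Fin k, and let q ∈ ℝ be a query point. Then a minimum-length color-spanning interval containing q either (a) contains q strictly in its interior and is a minimal color-spanning interval of P (both of whose endpoints are in P), or (b) has q as one of its endpoints, with the other endpoint a point of P. In particular, the optimum length equals the minimum of: min over minimal color-spanning intervals [a,b] with a ≤ q ≤ b of (b-a), and min over points p ∈ P of the length of the smallest color-spanning interval with one endpoint q extending to include a minimal color-spanning interval ending/starting at p, i.e., min over p ≤ q of (end(p) + (q - p)) and min over p ≥ q of (start(p) + (p - q)), where end(p) (resp. start(p)) is the length of the smallest color-spanning interval ending (resp. starting) at p. -/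
/-!
A color-spanning interval around `q` can be shrunk, keeping `q` and every color, to the hull of
`q` and the points of `P` it contains. So it suffices to minimize the length over the finitely
many intervals with endpoints in `P ∪ {q}`; an optimum has both endpoints in `P` unless one of
them is `q` (if both are, `[q, q]` contains a point of the color of `q`, so `q ∈ P`).
-/

open Finset

def ColorSpanning {α ι : Type*} [LinearOrder α] (P : Finset α) (col : α → ι) (a b : α) : Prop :=
  ∀ i, ∃ p ∈ P, col p = i ∧ a ≤ p ∧ p ≤ b

namespace ColorSpanning

section LinearOrder

variable {α ι : Type*} [LinearOrder α] {P : Finset α} {col : α → ι} {a b q : α}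

theorem of_forall_mem (hsurj : ∀ i, ∃ p ∈ P, col p = i) (h : ∀ p ∈ P, a ≤ p ∧ p ≤ b) :
    ColorSpanning P col a b := fun i ↦
  let ⟨p, hp, hc⟩ := hsurj i
  ⟨p, hp, hc, h p hp⟩

theorem mem_of_self (h : ColorSpanning P col q q) : q ∈ P := by
  obtain ⟨p, hp, -, hqp, hpq⟩ := h (col q)
  rwa [le_antisymm hpq hqp] at hp

theorem endpoints_mem (ha : a ∈ insert q P) (hb : b ∈ insert q P) (hab : ColorSpanning P col a b) :
    (a ∈ P ∧ b ∈ P) ∨ (a = q ∧ b ∈ P) ∨ (b = q ∧ a ∈ P) := by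
  rcases mem_insert.1 ha with rfl | haP <;> rcases mem_insert.1 hb with rfl | hbP
  · exact .inl ⟨hab.mem_of_self, hab.mem_of_self⟩
  · exact .inr (.inl ⟨rfl, hbP⟩)
  · exact .inr (.inr ⟨rfl, haP⟩)
  · exact .inl ⟨haP, hbP⟩

theorem exists_shrink (h : ColorSpanning P col a b) (haq : a ≤ q) (hqb : q ≤ b) :
    ∃ a' ∈ insert q P, ∃ b' ∈ insert q P,
      a ≤ a' ∧ a' ≤ q ∧ q ≤ b' ∧ b' ≤ b ∧ ColorSpanning P col a' b' := by
  classical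
  set A := insert q (P.filter fun p ↦ a ≤ p ∧ p ≤ b)
  have hqA : q ∈ A := mem_insert_self _ _
  have hA : A.Nonempty := ⟨q, hqA⟩
  have hAsub : A ⊆ insert q P := insert_subset_insert _ (filter_subset _ _)
  have hAIcc : ∀ x ∈ A, a ≤ x ∧ x ≤ b := by
    simp only [A, mem_insert, mem_filter]
    rintro x (rfl | ⟨-, hx⟩)
    exacts [⟨haq, hqb⟩, hx]
  refine ⟨A.min' hA, hAsub (A.min'_mem hA), A.max' hA, hAsub (A.max'_mem hA),
    (hAIcc _ (A.min'_mem hA)).1, A.min'_le q hqA, A.le_max' q hqA,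
    (hAIcc _ (A.max'_mem hA)).2, fun i ↦ ?_⟩
  obtain ⟨p, hp, hc, hap, hpb⟩ := h i
  have hpA : p ∈ A := mem_insert_of_mem (mem_filter.2 ⟨hp, hap, hpb⟩)
  exact ⟨p, hp, hc, A.min'_le p hpA, A.le_max' p hpA⟩

end LinearOrder

variable {α ι : Type*} [AddCommGroup α] [LinearOrder α] [IsOrderedAddMonoid α]
  {P : Finset α} {col : α → ι}

theorem exists_shortest (hsurj : ∀ i, ∃ p ∈ P, col p = i) (q : α) :
    ∃ a ∈ insert q P, ∃ b ∈ insert q P, a ≤ q ∧ q ≤ b ∧ ColorSpanning P col a b ∧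
      ∀ a' b', a' ≤ q → q ≤ b' → ColorSpanning P col a' b' → b - a ≤ b' - a' := by
  classical
  set S := insert q P
  have hS : S.Nonempty := ⟨q, mem_insert_self _ _⟩
  set T := (S ×ˢ S).filter fun ab ↦ ab.1 ≤ q ∧ q ≤ ab.2 ∧ ColorSpanning P col ab.1 ab.2
  have hT : T.Nonempty := by
    refine ⟨(S.min' hS, S.max' hS), mem_filter.2 ⟨mem_product.2 ⟨S.min'_mem hS, S.max'_mem hS⟩,
      S.min'_le q (mem_insert_self _ _), S.le_max' q (mem_insert_self _ _), of_forall_mem hsurj ?_⟩⟩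
    exact fun p hp ↦ ⟨S.min'_le p (mem_insert_of_mem hp), S.le_max' p (mem_insert_of_mem hp)⟩
  obtain ⟨⟨a, b⟩, habT, hmin⟩ := T.exists_min_image (fun ab ↦ ab.2 - ab.1) hT
  obtain ⟨hab, haq, hqb, hspan⟩ := mem_filter.1 habT
  refine ⟨a, (mem_product.1 hab).1, b, (mem_product.1 hab).2, haq, hqb, hspan,
    fun a' b' ha' hb' hspan' ↦ ?_⟩
  obtain ⟨a'', ha'', b'', hb'', ha'a'', ha''q, hqb'', hb''b', hspan''⟩ :=
    hspan'.exists_shrink ha' hb'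
  calc b - a ≤ b'' - a'' := hmin (a'', b'') (mem_filter.2 ⟨mem_product.2 ⟨ha'', hb''⟩,
        ha''q, hqb'', hspan''⟩)
    _ ≤ b' - a' := sub_le_sub hb''b' ha'a''

end ColorSpanning

theorem stmt16 (k : ℕ) (P : Finset ℝ) (col : ℝ → Fin k)
    (hsurj : ∀ i : Fin k, ∃ p ∈ P, col p = i) (q : ℝ) :
    ∃ a b : ℝ, a ≤ q ∧ q ≤ b ∧
      (∀ i : Fin k, ∃ p ∈ P, col p = i ∧ a ≤ p ∧ p ≤ b) ∧
      (∀ a' b' : ℝ, a' ≤ q → q ≤ b' →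
        (∀ i : Fin k, ∃ p ∈ P, col p = i ∧ a' ≤ p ∧ p ≤ b') → b - a ≤ b' - a') ∧
      ((a ∈ P ∧ b ∈ P) ∨ (a = q ∧ b ∈ P) ∨ (b = q ∧ a ∈ P)) := by
  obtain ⟨a, ha, b, hb, haq, hqb, hspan, hmin⟩ := ColorSpanning.exists_shortest hsurj q
  exact ⟨a, b, haq, hqb, hspan, hmin, ColorSpanning.endpoints_mem ha hb hspan⟩
end

section
/- Let z = (α, β₁) and z' = (α, β₂) with β₁ ≥ β₂ ≥ 0, and let p = (x_p, y_p), r = (x_r, y_r) be two points with y_p ≥ y_r ≥ β₁. If dist(z', p) ≤ dist(z', r) then dist(z, p) ≤ dist(z, r). (Moving the reference point upward along a vertical line, while staying below both points, preserves the property that the higher point is at most as far as the lower point.) -/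
/-!
For a fixed pair `p`, `r`, the quantity `dist z p ^ 2 - dist z r ^ 2` is an affine function of `z`
with gradient `-2 (p - r)`. Moving `z` in a direction `v` with `⟪v, p - r⟫ ≥ 0` therefore cannot
increase it, and moving it straight up towards the higher point `p` is such a direction.
-/

open RealInnerProductSpace

section

variable {E : Type*} [NormedAddCommGroup E] [InnerProductSpace ℝ E]

theorem dist_sq_sub_dist_sq_eq (z z' p r : E) :
    dist z p ^ 2 - dist z r ^ 2 = dist z' p ^ 2 - dist z' r ^ 2 - 2 * ⟪z - z', p - r⟫ := by
  simp only [dist_eq_norm, norm_sub_sq_real, inner_sub_left, inner_sub_right]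
  ring

theorem dist_le_dist_of_inner_sub_nonneg {z z' p r : E} (h : 0 ≤ ⟪z - z', p - r⟫)
    (hd : dist z' p ≤ dist z' r) : dist z p ≤ dist z r := by
  have hd_sq : dist z' p ^ 2 ≤ dist z' r ^ 2 := pow_le_pow_left₀ dist_nonneg hd 2
  have key := dist_sq_sub_dist_sq_eq z z' p r
  exact (pow_le_pow_iff_left₀ dist_nonneg dist_nonneg two_ne_zero).mp (by linarith)

end

theorem stmt17_general (p r z z' : EuclideanSpace ℝ (Fin 2)) (hx : z 0 = z' 0)
    (h1 : r 1 ≤ p 1) (h3 : z' 1 ≤ z 1)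
    (hd : dist z' p ≤ dist z' r) : dist z p ≤ dist z r := by
  refine dist_le_dist_of_inner_sub_nonneg ?_ hd
  have hinner : ⟪z - z', p - r⟫ = (z 1 - z' 1) * (p 1 - r 1) := by
    simp only [PiLp.inner_apply, PiLp.sub_apply, RCLike.inner_apply, Real.ringHom_apply,
      Fin.sum_univ_two, hx, sub_self, mul_zero, zero_add]
    ring
  rw [hinner]
  exact mul_nonneg (sub_nonneg.mpr h3) (sub_nonneg.mpr h1)

theorem stmt17 (p r z z' : EuclideanSpace ℝ (Fin 2)) (hx : z 0 = z' 0)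
    (h1 : r 1 ≤ p 1) (h2 : z 1 ≤ r 1) (h3 : z' 1 ≤ z 1) (h4 : 0 ≤ z' 1)
    (hd : dist z' p ≤ dist z' r) : dist z p ≤ dist z r :=
  stmt17_general p r z z' hx h1 h3 hd
end

section
/- Let D₁ be the closed disk of radius r₁ centered at c₁ and suppose q ∈ ℝ² satisfies dist(q, c₁) = r₁ (q is on the boundary of D₁). Let ℓ be any line through q. Then the smallest closed disk centered on ℓ containing D₁ has radius r₁·(1 + sin θ), where θ ∈ [0, π/2] is the angle between ℓ and the line through q and c₁. In particular this radius is at most r₁·(1 + θ). -/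
/-!
For a unit vector `v`, Pythagoras gives `‖w - t • v‖² = (t - ⟪w, v⟫)² + ‖w‖² - ⟪w, v⟫²`, so the
point of the line `q + ℝ v` nearest to `c₁` is the foot `q + ⟪c₁ - q, v⟫ • v`, at squared distance
`r₁² - r₁² cos² θ = r₁² sin² θ`. A disk centred at `x` contains `D₁` iff its radius is at least
`dist x c₁ + r₁`, which is therefore minimal at the foot.
-/

section LineThroughPoint

variable {E : Type*} [NormedAddCommGroup E] [InnerProductSpace ℝ E]

theorem norm_sub_smul_sq_of_norm_eq_one {v : E} (hv : ‖v‖ = 1) (w : E) (t : ℝ) :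
    ‖w - t • v‖ ^ 2 = (t - inner ℝ w v) ^ 2 + (‖w‖ ^ 2 - inner ℝ w v ^ 2) := by
  rw [norm_sub_sq_real, inner_smul_right, norm_smul, hv, Real.norm_eq_abs, mul_one, sq_abs]
  ring

theorem dist_add_smul_eq_norm_sub (c q v : E) (t : ℝ) :
    dist c (q + t • v) = ‖(c - q) - t • v‖ := by
  rw [dist_eq_norm, sub_sub]

theorem dist_add_inner_smul_sq {v : E} (hv : ‖v‖ = 1) (c q : E) :
    dist c (q + inner ℝ (c - q) v • v) ^ 2 = dist c q ^ 2 - inner ℝ (c - q) v ^ 2 := by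
  rw [dist_add_smul_eq_norm_sub, norm_sub_smul_sq_of_norm_eq_one hv, dist_eq_norm]
  ring

theorem dist_add_inner_smul_le {v : E} (hv : ‖v‖ = 1) (c q : E) (t : ℝ) :
    dist c (q + inner ℝ (c - q) v • v) ≤ dist c (q + t • v) := by
  rw [← pow_le_pow_iff_left₀ dist_nonneg dist_nonneg two_ne_zero, dist_add_inner_smul_sq hv,
    dist_add_smul_eq_norm_sub, norm_sub_smul_sq_of_norm_eq_one hv, dist_eq_norm]
  nlinarith [sq_nonneg (t - inner ℝ (c - q) v)]

end LineThroughPoint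

theorem stmt18_general (c₁ q v d : EuclideanSpace ℝ (Fin 2)) (r₁ θ : ℝ)
    (hθ : θ ∈ Set.Icc 0 (Real.pi / 2)) (hcq : dist c₁ q = r₁) (hv : ‖v‖ = 1)
    (hangle : |(inner ℝ (c₁ - q) v : ℝ)| = r₁ * Real.cos θ)
    (hd : d = q + (inner ℝ (c₁ - q) v : ℝ) • v) :
    dist c₁ d = r₁ * Real.sin θ ∧
    dist d c₁ + r₁ = r₁ * (1 + Real.sin θ) ∧
    (∀ t r : ℝ, dist (q + t • v) c₁ + r₁ ≤ r → r₁ * (1 + Real.sin θ) ≤ r) ∧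
    r₁ * (1 + Real.sin θ) ≤ r₁ * (1 + θ) := by
  obtain ⟨hθ0, hθπ⟩ := hθ
  have hr : 0 ≤ r₁ := hcq ▸ dist_nonneg
  have hsin : 0 ≤ Real.sin θ :=
    Real.sin_nonneg_of_nonneg_of_le_pi hθ0 (hθπ.trans (by linarith [Real.pi_pos]))
  have hfoot : dist c₁ d = r₁ * Real.sin θ := by
    rw [← pow_left_inj₀ dist_nonneg (mul_nonneg hr hsin) two_ne_zero, hd,
      dist_add_inner_smul_sq hv, hcq, ← sq_abs (inner ℝ _ _), hangle, mul_pow, mul_pow,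
      Real.sin_sq]
    ring
  refine ⟨hfoot, by rw [dist_comm, hfoot]; ring, fun t r hcontains => ?_, ?_⟩
  · calc r₁ * (1 + Real.sin θ) = dist c₁ d + r₁ := by rw [hfoot]; ring
      _ ≤ dist (q + t • v) c₁ + r₁ := by
        rw [dist_comm _ c₁, hd]
        gcongr
        exact dist_add_inner_smul_le hv c₁ q t
      _ ≤ r := hcontains
  · gcongr
    exact Real.sin_le hθ0

theorem stmt18 (c₁ q v d : EuclideanSpace ℝ (Fin 2)) (r₁ θ : ℝ) (hr : 0 < r₁)
    (hθ : θ ∈ Set.Icc 0 (Real.pi / 2)) (hcq : dist c₁ q = r₁) (hv : ‖v‖ = 1)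
    (hangle : |(inner ℝ (c₁ - q) v : ℝ)| = r₁ * Real.cos θ)
    (hd : d = q + (inner ℝ (c₁ - q) v : ℝ) • v) :
    dist c₁ d = r₁ * Real.sin θ ∧
    dist d c₁ + r₁ = r₁ * (1 + Real.sin θ) ∧
    (∀ t r : ℝ, dist (q + t • v) c₁ + r₁ ≤ r → r₁ * (1 + Real.sin θ) ≤ r) ∧
    r₁ * (1 + Real.sin θ) ≤ r₁ * (1 + θ) :=
  stmt18_general c₁ q v d r₁ θ hθ hcq hv hangle hd
end
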